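/- arXiv:1707.08722 — 10 statements merged into one kernel-verified Lean document; each statement's English description precedes it below -/
import Mathlib

section
/- Let M₁, M₂ be symmetric real 4×4 matrices with rank M₁ = 2, rank M₂ = 2, and rank(M₁ − M₂) = 4. Then every matrix N in the linear span of {M₁, M₂} with rank N = 2 is a nonzero scalar multiple of M₁ or a nonzero scalar multiple of M₂. -/
/-!
The rank hypotheses force `ker M₁ ⊔ ker M₂` to be the whole space: the two kernels have dimensions
adding up to `4` and meet inside `ker (M₁ - M₂) = 0`. Writing `v = u + w` with `M₁ u = 0` and
`M₂ w = 0` gives `(a • M₁ + b • M₂) v = a • M₁ w + b • M₂ u`, so for `a, b ≠ 0` the range of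
`a • M₁ + b • M₂` is `M₁ (ker M₂) ⊔ M₂ (ker M₁)`, independent of `a` and `b`. Taking `a = 1`,
`b = -1` shows that this combination has rank `4`; only `a = 0` or `b = 0` can give rank `2`.
-/

open Module

namespace LinearMap

section Semifield

variable {K V W : Type*} [Semifield K] [AddCommMonoid V] [Module K V] [AddCommMonoid W] [Module K W]

theorem map_add_eq_map_of_le_ker {f g : V →ₗ[K] W} {p : Submodule K V} (hp : p ≤ ker f) :
    p.map (f + g) = p.map g := by
  ext y
  simp only [Submodule.mem_map, add_apply]
  constructor <;> rintro ⟨x, hx, rfl⟩ <;> exact ⟨x, hx, by simp [mem_ker.mp (hp hx)]⟩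

theorem range_smul_add_smul_of_sup_ker_eq_top {f g : V →ₗ[K] W} (h : ker f ⊔ ker g = ⊤)
    {a b : K} (ha : a ≠ 0) (hb : b ≠ 0) :
    range (a • f + b • g) = (ker g).map f ⊔ (ker f).map g := by
  have hf : ker f ≤ ker (a • f) := fun x hx => by simp [mem_ker.mp hx]
  have hg : ker g ≤ ker (b • g) := fun x hx => by simp [mem_ker.mp hx]
  rw [← Submodule.map_top, ← h, Submodule.map_sup, map_add_eq_map_of_le_ker hf,
    add_comm, map_add_eq_map_of_le_ker hg, Submodule.map_smul _ _ _ hb,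
    Submodule.map_smul _ _ _ ha, sup_comm]

end Semifield

variable {K V W : Type*} [Field K] [AddCommGroup V] [Module K V] [AddCommGroup W] [Module K W]

theorem range_smul_add_smul_eq_range_sub {f g : V →ₗ[K] W} (h : ker f ⊔ ker g = ⊤)
    {a b : K} (ha : a ≠ 0) (hb : b ≠ 0) :
    range (a • f + b • g) = range (f - g) := by
  rw [range_smul_add_smul_of_sup_ker_eq_top h ha hb,
    ← range_smul_add_smul_of_sup_ker_eq_top h one_ne_zero (neg_ne_zero.2 one_ne_zero), one_smul,
    neg_one_smul, ← sub_eq_add_neg]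

theorem sup_ker_eq_top_of_finrank_range_add_le [FiniteDimensional K V] {f g : V →ₗ[K] W}
    (h : finrank K (range f) + finrank K (range g) ≤ finrank K (range (f - g))) :
    ker f ⊔ ker g = ⊤ := by
  have hinf : ker f ⊓ ker g ≤ ker (f - g) := fun x hx => by
    simp [mem_ker.mp hx.1, mem_ker.mp hx.2]
  have := Submodule.finrank_sup_add_finrank_inf_eq (ker f) (ker g)
  have := Submodule.finrank_mono hinf
  have := f.finrank_range_add_finrank_ker
  have := g.finrank_range_add_finrank_ker
  have := (f - g).finrank_range_add_finrank_ker
  exact Submodule.eq_top_of_finrank_eq (le_antisymm (Submodule.finrank_le _) (by omega))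

end LinearMap

namespace Matrix

variable {m n K : Type*} [Fintype n] [Field K]

theorem rank_smul_add_smul_eq_rank_sub {A B : Matrix m n K} (h : A.rank + B.rank ≤ (A - B).rank)
    {a b : K} (ha : a ≠ 0) (hb : b ≠ 0) : (a • A + b • B).rank = (A - B).rank := by
  have hsub : (A - B).mulVecLin = A.mulVecLin - B.mulVecLin := by
    ext; simp
  have hcomb : (a • A + b • B).mulVecLin = a • A.mulVecLin + b • B.mulVecLin := by
    ext; simp
  rw [rank, rank, rank, hsub] at h
  rw [rank, rank, hcomb, hsub, LinearMap.range_smul_add_smul_eq_range_sub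
    (LinearMap.sup_ker_eq_top_of_finrank_range_add_le h) ha hb]

end Matrix

open Matrix

theorem stmt_1_general (M₁ M₂ : Matrix (Fin 4) (Fin 4) ℝ)
    (hr₁ : M₁.rank = 2) (hr₂ : M₂.rank = 2) (hr : (M₁ - M₂).rank = 4) :
    ∀ a b : ℝ, (a • M₁ + b • M₂).rank = 2 →
      (∃ c : ℝ, c ≠ 0 ∧ a • M₁ + b • M₂ = c • M₁) ∨
      (∃ c : ℝ, c ≠ 0 ∧ a • M₁ + b • M₂ = c • M₂) := by
  intro a b hN
  by_cases ha : a = 0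
  · have hb : b ≠ 0 := by rintro rfl; simp [ha] at hN
    exact Or.inr ⟨b, hb, by simp [ha]⟩
  by_cases hb : b = 0
  · exact Or.inl ⟨a, ha, by simp [hb]⟩
  have := rank_smul_add_smul_eq_rank_sub (by omega : M₁.rank + M₂.rank ≤ (M₁ - M₂).rank) ha hb
  omega

theorem stmt_1 (M₁ M₂ : Matrix (Fin 4) (Fin 4) ℝ)
    (hs₁ : M₁.IsSymm) (hs₂ : M₂.IsSymm)
    (hr₁ : M₁.rank = 2) (hr₂ : M₂.rank = 2) (hr : (M₁ - M₂).rank = 4) :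
    ∀ a b : ℝ, (a • M₁ + b • M₂).rank = 2 →
      (∃ c : ℝ, c ≠ 0 ∧ a • M₁ + b • M₂ = c • M₁) ∨
      (∃ c : ℝ, c ≠ 0 ∧ a • M₁ + b • M₂ = c • M₂) :=
  stmt_1_general M₁ M₂ hr₁ hr₂ hr
end

section
/- Let M₁, M₂ be symmetric real 4×4 matrices with rank M₁ = 2, rank M₂ = 2, and rank(M₁ − M₂) = 4. Then the linear span of {M₁, M₂} contains no matrix of rank 3; that is, for every N = a·M₁ + b·M₂ with a, b ∈ ℝ, rank N ≠ 3. -/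
/-!
Since `range (M₁ - M₂) ≤ range M₁ ⊔ range M₂`, the ranks `2 + 2 = 4` force the ranges of `M₁` and
`M₂` to be independent. Then `(a • M₁ + b • M₂) x = 0` with `a, b ≠ 0` forces `M₁ x = M₂ x = 0`,
so `x ∈ ker (M₁ - M₂) = 0`: every such combination is invertible, while those with `a = 0` or
`b = 0` have rank at most `2`.
-/

open Matrix

namespace LinearMap

open Module

variable {K V W : Type*} [Field K] [AddCommGroup V] [Module K V] [AddCommGroup W] [Module K W]

theorem disjoint_range_of_finrank_range_add_le_finrank_range_sub [FiniteDimensional K W]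
    {f g : V →ₗ[K] W}
    (h : finrank K (range f) + finrank K (range g) ≤ finrank K (range (f - g))) :
    Disjoint (range f) (range g) := by
  have hsub : range (f - g) ≤ range f ⊔ range g := by
    rintro _ ⟨x, rfl⟩
    exact sub_mem (Submodule.mem_sup_left ⟨x, rfl⟩) (Submodule.mem_sup_right ⟨x, rfl⟩)
  have hsup := Submodule.finrank_mono hsub
  have hdim := Submodule.finrank_sup_add_finrank_inf_eq (range f) (range g)
  rw [disjoint_iff, ← Submodule.finrank_eq_zero]
  omega

theorem ker_smul_add_smul_eq_inf_of_disjoint_range {f g : V →ₗ[K] W}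
    (h : Disjoint (range f) (range g)) {a b : K} (ha : a ≠ 0) (hb : b ≠ 0) :
    ker (a • f + b • g) = ker f ⊓ ker g := by
  ext x
  simp only [mem_ker, Submodule.mem_inf, add_apply, smul_apply]
  refine ⟨fun hx => ?_, fun ⟨hf, hg⟩ => by simp [hf, hg]⟩
  have hfg : a • f x = -(b • g x) := eq_neg_of_add_eq_zero_left hx
  have hzero : a • f x = 0 := Submodule.disjoint_def.mp h _
    (Submodule.smul_mem _ a (mem_range_self f x))
    (hfg ▸ Submodule.neg_mem _ (Submodule.smul_mem _ b (mem_range_self g x)))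
  have hgx : b • g x = 0 := by rwa [hzero, zero_eq_neg] at hfg
  exact ⟨(smul_eq_zero.mp hzero).resolve_left ha, (smul_eq_zero.mp hgx).resolve_left hb⟩

theorem finrank_range_sub_le_finrank_range_smul_add_smul [FiniteDimensional K V]
    [FiniteDimensional K W] {f g : V →ₗ[K] W}
    (h : finrank K (range f) + finrank K (range g) ≤ finrank K (range (f - g)))
    {a b : K} (ha : a ≠ 0) (hb : b ≠ 0) :
    finrank K (range (f - g)) ≤ finrank K (range (a • f + b • g)) := by
  have hker : ker (a • f + b • g) ≤ ker (f - g) := by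
    rw [ker_smul_add_smul_eq_inf_of_disjoint_range
      (disjoint_range_of_finrank_range_add_le_finrank_range_sub h) ha hb]
    rintro x ⟨hf, hg⟩
    simp_all
  have := Submodule.finrank_mono hker
  have := finrank_range_add_finrank_ker (f - g)
  have := finrank_range_add_finrank_ker (a • f + b • g)
  omega

end LinearMap

namespace Matrix

variable {K m n : Type*} [Field K] [Fintype n] [DecidableEq n]

theorem rank_smul_le (c : K) (A : Matrix m n K) : (c • A).rank ≤ A.rank := by
  rw [rank, rank, ← toLin'_apply', ← toLin'_apply', map_smul]
  exact Submodule.finrank_mono (LinearMap.range_smul_le_range _ c)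

theorem rank_sub_le_rank_smul_add_smul [Fintype m] {A B : Matrix m n K}
    (h : A.rank + B.rank ≤ (A - B).rank)
    {a b : K} (ha : a ≠ 0) (hb : b ≠ 0) : (A - B).rank ≤ (a • A + b • B).rank := by
  have hsub : (A - B).rank = Module.finrank K (LinearMap.range (toLin' A - toLin' B)) := by
    rw [← map_sub]; rfl
  have hcomb : (a • A + b • B).rank =
      Module.finrank K (LinearMap.range (a • toLin' A + b • toLin' B)) := by
    rw [← map_smul, ← map_smul, ← map_add]; rfl
  rw [hsub] at h
  rw [hsub, hcomb]
  exact LinearMap.finrank_range_sub_le_finrank_range_smul_add_smul h ha hb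

end Matrix

theorem stmt_2_general (M₁ M₂ : Matrix (Fin 4) (Fin 4) ℝ)
    (hr₁ : M₁.rank = 2) (hr₂ : M₂.rank = 2) (hr : (M₁ - M₂).rank = 4) :
    ∀ a b : ℝ, (a • M₁ + b • M₂).rank ≠ 3 := by
  intro a b
  rcases eq_or_ne a 0 with rfl | ha
  · have := rank_smul_le b M₂
    simp only [zero_smul, zero_add]
    omega
  rcases eq_or_ne b 0 with rfl | hb
  · have := rank_smul_le a M₁
    simp only [zero_smul, add_zero]
    omega
  have := rank_sub_le_rank_smul_add_smul (A := M₁) (B := M₂) (by omega) ha hb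
  omega

theorem stmt_2 (M₁ M₂ : Matrix (Fin 4) (Fin 4) ℝ)
    (hs₁ : M₁.IsSymm) (hs₂ : M₂.IsSymm)
    (hr₁ : M₁.rank = 2) (hr₂ : M₂.rank = 2) (hr : (M₁ - M₂).rank = 4) :
    ∀ a b : ℝ, (a • M₁ + b • M₂).rank ≠ 3 :=
  stmt_2_general M₁ M₂ hr₁ hr₂ hr
end

section
/- Let M₁, M₂ be symmetric real 4×4 matrices with rank M₁ = 2, rank M₂ = 2, and rank(M₁ − M₂) = 4. Then for all α ∈ ℝ, det(α·M₁ + (1−α)·M₂) = det(M₁ − M₂) · α² · (α − 1)². In particular, the quartic polynomial α ↦ det(α·M₁ + (1−α)·M₂) has exactly the two roots α = 0 and α = 1, each of multiplicity two. -/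
/-!
Write `N = M₁ - M₂`, which is invertible, so `ker M₁ ∩ ker M₂ ⊆ ker N = 0`; since the two
kernels have dimensions `4 - rank M₁` and `4 - rank M₂`, adding up to `4`, they are
complementary. The pencil `α M₁ + (1 - α) M₂` equals `M₂ + α N = M₁ + (α - 1) N`, so
`N⁻¹ (α M₁ + (1 - α) M₂)` is multiplication by `α` on `ker M₂` and by `α - 1` on `ker M₁`,
and its determinant is `α ^ (4 - rank M₂) * (α - 1) ^ (4 - rank M₁)`.
-/

open Matrix Module

namespace LinearMap

variable {K V : Type*} [Field K] [AddCommGroup V] [Module K V] [FiniteDimensional K V]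

theorem det_eq_pow_mul_pow_of_isCompl {U W : Submodule K V} (h : IsCompl U W) {f : V →ₗ[K] V}
    {a b : K} (hU : ∀ u ∈ U, f u = a • u) (hW : ∀ w ∈ W, f w = b • w) :
    f.det = a ^ finrank K U * b ^ finrank K W := by
  let e := Submodule.prodEquivOfIsCompl U W h
  have hf : f = e.toLinearMap ∘ₗ prodMap (a • id) (b • id) ∘ₗ e.symm.toLinearMap := by
    rw [← comp_assoc, LinearEquiv.eq_comp_toLinearMap_symm]
    ext x
    · simp [e, hU x x.2]
    · simp [e, hW x x.2]
  rw [hf, det_conj, det_prodMap, det_smul, det_smul, det_id, det_id, mul_one, mul_one]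

end LinearMap

namespace Matrix

variable {n K : Type*} [Fintype n] [Field K]

theorem finrank_ker_mulVecLin (A : Matrix n n K) :
    finrank K (LinearMap.ker A.mulVecLin) = Fintype.card n - A.rank := by
  have := A.mulVecLin.finrank_range_add_finrank_ker
  rw [finrank_pi] at this
  rw [rank]
  omega

variable [DecidableEq n]

theorem inv_mul_add_smul_mulVec_of_mulVec_eq_zero {R : Type*} [CommRing R] {B N : Matrix n n R}
    (hN : IsUnit N.det) (c : R) {v : n → R} (hv : B *ᵥ v = 0) :
    (N⁻¹ * (B + c • N)) *ᵥ v = c • v := by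
  rw [Matrix.mul_add, Matrix.mul_smul, nonsing_inv_mul _ hN, add_mulVec, ← mulVec_mulVec, hv,
    mulVec_zero, zero_add, smul_mulVec, one_mulVec]

theorem isUnit_det_of_rank_eq_card {A : Matrix n n K} (h : A.rank = Fintype.card n) :
    IsUnit A.det := by
  have hrange : LinearMap.range A.mulVecLin = ⊤ :=
    Submodule.eq_top_of_finrank_eq (by rw [finrank_pi]; exact h)
  exact (isUnit_iff_isUnit_det A).mp
    (mulVec_surjective_iff_isUnit.mp (LinearMap.range_eq_top.mp hrange))

theorem det_smul_add_one_sub_smul {A B : Matrix n n K}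
    (hrank : A.rank + B.rank = Fintype.card n) (hAB : IsUnit (A - B).det) (α : K) :
    (α • A + (1 - α) • B).det =
      (A - B).det * α ^ (Fintype.card n - B.rank) * (α - 1) ^ (Fintype.card n - A.rank) := by
  set N := A - B
  set P := α • A + (1 - α) • B
  have hN : Function.Injective N.mulVec :=
    mulVec_injective_of_isUnit ((isUnit_iff_isUnit_det N).mpr hAB)
  have hdisj : Disjoint (LinearMap.ker B.mulVecLin) (LinearMap.ker A.mulVecLin) := by
    rw [Submodule.disjoint_def]
    intro v hB hA
    apply hN
    simp_all [N, sub_mulVec]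
  have hcompl : IsCompl (LinearMap.ker B.mulVecLin) (LinearMap.ker A.mulVecLin) := by
    refine (Submodule.isCompl_iff_disjoint _ _ ?_).mpr hdisj
    rw [finrank_ker_mulVecLin, finrank_ker_mulVecLin, finrank_pi]
    omega
  have hPB : P = B + α • N := by simp only [P, N]; module
  have hPA : P = A + (α - 1) • N := by simp only [P, N]; module
  have hB : ∀ v ∈ LinearMap.ker B.mulVecLin, (N⁻¹ * P).mulVecLin v = α • v := fun v hv => by
    rw [hPB]; exact inv_mul_add_smul_mulVec_of_mulVec_eq_zero hAB α hv
  have hA : ∀ v ∈ LinearMap.ker A.mulVecLin, (N⁻¹ * P).mulVecLin v = (α - 1) • v := fun v hv => by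
    rw [hPA]; exact inv_mul_add_smul_mulVec_of_mulVec_eq_zero hAB (α - 1) hv
  have hfac : P = N * (N⁻¹ * P) := by
    rw [← Matrix.mul_assoc, mul_nonsing_inv _ hAB, Matrix.one_mul]
  rw [hfac, det_mul, ← LinearMap.det_toLin' (N⁻¹ * P), toLin'_apply',
    LinearMap.det_eq_pow_mul_pow_of_isCompl hcompl hB hA, finrank_ker_mulVecLin,
    finrank_ker_mulVecLin, mul_assoc]

end Matrix

theorem stmt_3_general (M₁ M₂ : Matrix (Fin 4) (Fin 4) ℝ)
    (hr₁ : M₁.rank = 2) (hr₂ : M₂.rank = 2) (hr : (M₁ - M₂).rank = 4) :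
    (∀ α : ℝ, (α • M₁ + (1 - α) • M₂).det =
        (M₁ - M₂).det * α ^ 2 * (α - 1) ^ 2) ∧
    (∀ α : ℝ, (α • M₁ + (1 - α) • M₂).det = 0 ↔ α = 0 ∨ α = 1) := by
  have hN : IsUnit (M₁ - M₂).det := isUnit_det_of_rank_eq_card (by simpa using hr)
  have hdet (α : ℝ) : (α • M₁ + (1 - α) • M₂).det = (M₁ - M₂).det * α ^ 2 * (α - 1) ^ 2 := by
    simpa [hr₁, hr₂] using det_smul_add_one_sub_smul (by simp [hr₁, hr₂]) hN α
  refine ⟨hdet, fun α => ?_⟩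
  rw [hdet, mul_eq_zero, mul_eq_zero, or_iff_right hN.ne_zero, pow_eq_zero_iff two_ne_zero,
    pow_eq_zero_iff two_ne_zero, sub_eq_zero]

theorem stmt_3 (M₁ M₂ : Matrix (Fin 4) (Fin 4) ℝ)
    (hs₁ : M₁.IsSymm) (hs₂ : M₂.IsSymm)
    (hr₁ : M₁.rank = 2) (hr₂ : M₂.rank = 2) (hr : (M₁ - M₂).rank = 4) :
    (∀ α : ℝ, (α • M₁ + (1 - α) • M₂).det =
        (M₁ - M₂).det * α ^ 2 * (α - 1) ^ 2) ∧
    (∀ α : ℝ, (α • M₁ + (1 - α) • M₂).det = 0 ↔ α = 0 ∨ α = 1) :=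
  stmt_3_general M₁ M₂ hr₁ hr₂ hr
end

section
/- Let A₁, A₂ be real 3×4 matrices, and let f₁, f₂ ∈ ℝ⁴ be nonzero vectors with A₁ f₁ = 0 and A₂ f₂ = 0. Let X, Y ∈ ℝ⁴, set M = X Yᵀ + Y Xᵀ and Nᵢ = Aᵢ M Aᵢᵀ for i = 1, 2. Consider the linear map L sending a triple (M′, λ₁, λ₂), where M′ is a symmetric real 4×4 matrix and λ₁, λ₂ ∈ ℝ, to the pair (A₁ M′ A₁ᵀ − λ₁ N₁, A₂ M′ A₂ᵀ − λ₂ N₂). Then both (f₁ f₂ᵀ + f₂ f₁ᵀ, 0, 0) and (M, 1, 1) lie in the kernel of L, and if f₁ and f₂ are linearly independent these two kernel elements are linearly independent, so the kernel of L has dimension at least 2. -/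
/-!
If `A f = 0` then `A (f gᵀ + g fᵀ) Aᵀ = (A f)(A g)ᵀ + (A g)(A f)ᵀ = 0`, so the unlabeled focal point
is killed by both cameras, while `(M, 1, 1)` is in the kernel by the definition of `Nᵢ`. The two
kernel elements are independent because their scalar parts are `0` and `1` and
`f₁ f₂ᵀ + f₂ f₁ᵀ ≠ 0`: applied to `f₁` it gives `(f₂ ⬝ f₁) f₁ + |f₁|² f₂`, which vanishes only if
`f₁ = 0`.
-/

open Matrix

/-- The submodule of symmetric real 4×4 matrices. -/
def Sym4 : Submodule ℝ (Matrix (Fin 4) (Fin 4) ℝ) where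
  carrier := {M | M.IsSymm}
  add_mem' := fun ha hb => ha.add hb
  zero_mem' := Matrix.isSymm_zero
  smul_mem' := fun c _ h => h.smul c

namespace Matrix

variable {l m R : Type*}

-- The symmetric matrix representing the unordered pair `{x, y}`.
def symmVecMulVec [Mul R] [Add R] (x y : m → R) : Matrix m m R :=
  vecMulVec x y + vecMulVec y x

theorem symmVecMulVec_comm [CommSemiring R] (x y : m → R) :
    symmVecMulVec x y = symmVecMulVec y x :=
  add_comm _ _

theorem isSymm_symmVecMulVec [CommSemiring R] (x y : m → R) : (symmVecMulVec x y).IsSymm := by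
  simp [IsSymm, symmVecMulVec, add_comm]

theorem mul_symmVecMulVec_mul_transpose_eq_zero [CommSemiring R] [Fintype m]
    (A : Matrix l m R) {x : m → R} (hx : A *ᵥ x = 0) (y : m → R) :
    A * symmVecMulVec x y * Aᵀ = 0 := by
  simp [symmVecMulVec, Matrix.mul_add, mul_vecMulVec, vecMulVec_mul,
    vecMul_transpose, hx]

theorem symmVecMulVec_ne_zero [CommRing R] [LinearOrder R] [IsStrictOrderedRing R] [Fintype m]
    {x y : m → R} (h : LinearIndependent R ![x, y]) : symmVecMulVec x y ≠ 0 := by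
  intro hxy
  have hx : (y ⬝ᵥ x) • x + (x ⬝ᵥ x) • y = 0 := by
    simpa [symmVecMulVec, add_mulVec, vecMulVec_mulVec] using congrArg (· *ᵥ x) hxy
  have hxx : x ⬝ᵥ x = 0 := (LinearIndependent.pair_iff.mp h _ _ hx).2
  exact h.ne_zero 0 (dotProduct_self_eq_zero.mp hxx)

end Matrix

theorem linearIndependent_pair_prod_mk_zero {K V W : Type*} [DivisionRing K] [AddCommGroup V]
    [Module K V] [AddCommGroup W] [Module K W] {u : V} (hu : u ≠ 0) (v : V) {w : W}
    (hw : w ≠ 0) : LinearIndependent K ![(u, (0 : W)), (v, w)] := by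
  refine LinearIndependent.pair_iff.mpr fun s t hst => ?_
  obtain ⟨hu', hw'⟩ := Prod.ext_iff.mp hst
  have ht : t = 0 := by simpa [hw] using hw'
  subst ht
  simpa [hu] using hu'

theorem Submodule.natCast_le_rank_of_linearIndependent {R M : Type*} [Ring R] [Nontrivial R]
    [AddCommGroup M] [Module R M] (p : Submodule R M) {n : ℕ} {v : Fin n → M}
    (hv : LinearIndependent R v) (hvp : ∀ i, v i ∈ p) : (n : Cardinal) ≤ Module.rank R p :=
  natCast_le_rank_iff.mpr ⟨fun i => ⟨v i, hvp i⟩, LinearIndependent.of_comp p.subtype hv⟩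

theorem stmt_4_general (A₁ A₂ : Matrix (Fin 3) (Fin 4) ℝ) (f₁ f₂ : Fin 4 → ℝ)
    (hA₁f₁ : A₁.mulVec f₁ = 0) (hA₂f₂ : A₂.mulVec f₂ = 0)
    (X Y : Fin 4 → ℝ) (M : Matrix (Fin 4) (Fin 4) ℝ)
    (hM : M = vecMulVec X Y + vecMulVec Y X)
    (N₁ N₂ : Matrix (Fin 3) (Fin 3) ℝ)
    (hN₁ : N₁ = A₁ * M * A₁ᵀ) (hN₂ : N₂ = A₂ * M * A₂ᵀ)
    (L : (Sym4 × ℝ × ℝ) →ₗ[ℝ] Matrix (Fin 3) (Fin 3) ℝ × Matrix (Fin 3) (Fin 3) ℝ)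
    (hL : ∀ p : Sym4 × ℝ × ℝ,
      L p = (A₁ * (p.1 : Matrix (Fin 4) (Fin 4) ℝ) * A₁ᵀ - p.2.1 • N₁,
             A₂ * (p.1 : Matrix (Fin 4) (Fin 4) ℝ) * A₂ᵀ - p.2.2 • N₂)) :
    ∃ (hF : vecMulVec f₁ f₂ + vecMulVec f₂ f₁ ∈ Sym4) (hMs : M ∈ Sym4),
      (⟨vecMulVec f₁ f₂ + vecMulVec f₂ f₁, hF⟩, (0 : ℝ), (0 : ℝ)) ∈ LinearMap.ker L ∧
      (⟨M, hMs⟩, (1 : ℝ), (1 : ℝ)) ∈ LinearMap.ker L ∧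
      (LinearIndependent ℝ ![f₁, f₂] →
        LinearIndependent ℝ
          ![((⟨vecMulVec f₁ f₂ + vecMulVec f₂ f₁, hF⟩, (0 : ℝ), (0 : ℝ)) :
              Sym4 × ℝ × ℝ),
            (⟨M, hMs⟩, (1 : ℝ), (1 : ℝ))] ∧
        2 ≤ Module.rank ℝ (LinearMap.ker L)) := by
  have hF : symmVecMulVec f₁ f₂ ∈ Sym4 := isSymm_symmVecMulVec f₁ f₂
  have hMs : M ∈ Sym4 := hM ▸ isSymm_symmVecMulVec X Y
  have hFker : ((⟨symmVecMulVec f₁ f₂, hF⟩, 0, 0) : Sym4 × ℝ × ℝ) ∈ LinearMap.ker L := by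
    have h₂ := mul_symmVecMulVec_mul_transpose_eq_zero A₂ hA₂f₂ f₁
    rw [symmVecMulVec_comm] at h₂
    simp [hL, mul_symmVecMulVec_mul_transpose_eq_zero A₁ hA₁f₁, h₂]
  have hMker : ((⟨M, hMs⟩, 1, 1) : Sym4 × ℝ × ℝ) ∈ LinearMap.ker L := by
    simp [hL, hN₁, hN₂]
  refine ⟨hF, hMs, hFker, hMker, fun hf => ?_⟩
  have hFne : (⟨symmVecMulVec f₁ f₂, hF⟩ : Sym4) ≠ 0 :=
    fun h => symmVecMulVec_ne_zero hf congr($h.1)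
  have hli := linearIndependent_pair_prod_mk_zero (K := ℝ) hFne ⟨M, hMs⟩
    (by simp : ((1 : ℝ), (1 : ℝ)) ≠ 0)
  refine ⟨hli, ?_⟩
  simpa using (LinearMap.ker L).natCast_le_rank_of_linearIndependent hli
    (fun i => by fin_cases i <;> assumption)

theorem stmt_4 (A₁ A₂ : Matrix (Fin 3) (Fin 4) ℝ) (f₁ f₂ : Fin 4 → ℝ)
    (hf₁ : f₁ ≠ 0) (hf₂ : f₂ ≠ 0)
    (hA₁f₁ : A₁.mulVec f₁ = 0) (hA₂f₂ : A₂.mulVec f₂ = 0)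
    (X Y : Fin 4 → ℝ) (M : Matrix (Fin 4) (Fin 4) ℝ)
    (hM : M = vecMulVec X Y + vecMulVec Y X)
    (N₁ N₂ : Matrix (Fin 3) (Fin 3) ℝ)
    (hN₁ : N₁ = A₁ * M * A₁ᵀ) (hN₂ : N₂ = A₂ * M * A₂ᵀ)
    (L : (Sym4 × ℝ × ℝ) →ₗ[ℝ] Matrix (Fin 3) (Fin 3) ℝ × Matrix (Fin 3) (Fin 3) ℝ)
    (hL : ∀ p : Sym4 × ℝ × ℝ,
      L p = (A₁ * (p.1 : Matrix (Fin 4) (Fin 4) ℝ) * A₁ᵀ - p.2.1 • N₁,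
             A₂ * (p.1 : Matrix (Fin 4) (Fin 4) ℝ) * A₂ᵀ - p.2.2 • N₂)) :
    ∃ (hF : vecMulVec f₁ f₂ + vecMulVec f₂ f₁ ∈ Sym4) (hMs : M ∈ Sym4),
      (⟨vecMulVec f₁ f₂ + vecMulVec f₂ f₁, hF⟩, (0 : ℝ), (0 : ℝ)) ∈ LinearMap.ker L ∧
      (⟨M, hMs⟩, (1 : ℝ), (1 : ℝ)) ∈ LinearMap.ker L ∧
      (LinearIndependent ℝ ![f₁, f₂] →
        LinearIndependent ℝ
          ![((⟨vecMulVec f₁ f₂ + vecMulVec f₂ f₁, hF⟩, (0 : ℝ), (0 : ℝ)) :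
              Sym4 × ℝ × ℝ),
            (⟨M, hMs⟩, (1 : ℝ), (1 : ℝ))] ∧
        2 ≤ Module.rank ℝ (LinearMap.ker L)) :=
  stmt_4_general A₁ A₂ f₁ f₂ hA₁f₁ hA₂f₂ X Y M hM N₁ N₂ hN₁ hN₂ L hL
end

section
/- Let A₁, A₂ be real 3×4 matrices of rank 3, and let f₁, f₂ ∈ ℝ⁴ be nonzero vectors with A₁ f₁ = 0, A₂ f₂ = 0, and f₁, f₂ linearly independent. Then the set of symmetric real 4×4 matrices M satisfying A₁ M A₁ᵀ = 0 and A₂ M A₂ᵀ = 0 is exactly the one-dimensional subspace spanned by the unlabeled focal point f₁ f₂ᵀ + f₂ f₁ᵀ. -/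
/-! A symmetric `M` with `A M Aᵀ = 0` vanishes as a bilinear form on `range Aᵀ = f⊥`, where `f`
spans `ker A`, and such forms are exactly `f uᵀ + u fᵀ`. For the second camera this gives
`(A₂ f₁)(A₂ u)ᵀ + (A₂ u)(A₂ f₁)ᵀ = 0`; as `A₂ f₁ ≠ 0` by independence of the focal points,
`A₂ u = 0`, i.e. `u ∈ ℝ f₂`. -/

open Matrix

namespace Matrix

variable {K m n : Type*} [Field K]

theorem eq_zero_of_vecMulVec_add_vecMulVec_eq_zero [NeZero (2 : K)] {a b : n → K}
    (h : vecMulVec a b + vecMulVec b a = 0) (ha : a ≠ 0) : b = 0 := by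
  obtain ⟨i, hi⟩ : ∃ i, a i ≠ 0 := Function.ne_iff.mp ha
  have hbi : b i = 0 := by
    have hii : 2 * (a i * b i) = 0 := by
      simpa [vecMulVec_apply, two_mul, mul_comm (b i)] using congrFun (congrFun h i) i
    simpa [hi, two_ne_zero] using hii
  funext j
  have hij : a i * b j + b i * a j = 0 := by
    simpa [vecMulVec_apply] using congrFun (congrFun h i) j
  simpa [hbi, hi] using hij

variable [Fintype n]

theorem mul_vecMulVec_add_vecMulVec_mul_transpose (A : Matrix m n K) (x y : n → K) :
    A * (vecMulVec x y + vecMulVec y x) * Aᵀ =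
      vecMulVec (A *ᵥ x) (A *ᵥ y) + vecMulVec (A *ᵥ y) (A *ᵥ x) := by
  simp only [Matrix.mul_add, Matrix.add_mul, mul_vecMulVec, vecMulVec_mul, vecMul_transpose]

theorem IsSymm.exists_eq_vecMulVec_add_vecMulVec [NeZero (2 : K)] {M : Matrix n n K}
    (hM : M.IsSymm) {f g : n → K} (hfg : f ⬝ᵥ g = 1)
    (h : ∀ w, f ⬝ᵥ w = 0 → ∃ c : K, c • f = M *ᵥ w) :
    ∃ u, M = vecMulVec f u + vecMulVec u f := by
  refine ⟨M *ᵥ g - (2⁻¹ * (g ⬝ᵥ M *ᵥ g)) • f, ext_iff_mulVec.mpr fun v => ?_⟩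
  set w := v - (f ⬝ᵥ v) • g
  obtain ⟨c, hc⟩ := h w (by simp [w, dotProduct_sub, hfg])
  have hc' : c = M *ᵥ g ⬝ᵥ w := by
    have := congrArg (g ⬝ᵥ ·) hc
    simp only [dotProduct_smul, dotProduct_comm g f, hfg, dotProduct_mulVec, smul_eq_mul,
      mul_one] at this
    rw [this, ← vecMul_transpose, hM.eq]
  calc M *ᵥ v = (f ⬝ᵥ v) • M *ᵥ g + c • f := by
        rw [hc, ← mulVec_smul, ← mulVec_add, add_sub_cancel]
    _ = _ := by
        rw [hc']
        simp only [w, add_mulVec, vecMulVec_mulVec, op_smul_eq_smul, dotProduct_sub,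
          dotProduct_smul, sub_dotProduct, smul_dotProduct, smul_eq_mul, dotProduct_comm g]
        match_scalars
        · field_simp
        · field_simp
          ring

theorem exists_smul_eq_of_mulVec_eq_zero {A : Matrix m n K} (hr : A.rank + 1 = Fintype.card n)
    {f v : n → K} (hf : f ≠ 0) (hAf : A *ᵥ f = 0) (hv : A *ᵥ v = 0) :
    ∃ c : K, c • f = v := by
  have hker : Module.finrank K (LinearMap.ker A.mulVecLin) = 1 := by
    have := LinearMap.finrank_range_add_finrank_ker A.mulVecLin
    rw [Module.finrank_fintype_fun_eq_card] at this
    change A.rank + _ = _ at this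
    omega
  obtain ⟨c, hc⟩ := (finrank_eq_one_iff_of_nonzero' (⟨f, hAf⟩ : LinearMap.ker A.mulVecLin)
    (by simpa [Subtype.ext_iff] using hf)).mp hker ⟨v, hv⟩
  exact ⟨c, congrArg Subtype.val hc⟩

theorem exists_transpose_mulVec_eq_of_dotProduct_eq_zero [Fintype m] {A : Matrix m n K}
    (hr : A.rank + 1 = Fintype.card n) {f w : n → K} (hf : f ≠ 0) (hAf : A *ᵥ f = 0)
    (hw : f ⬝ᵥ w = 0) : ∃ x : m → K, Aᵀ *ᵥ x = w := by
  classical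
  set φ : Module.Dual K (n → K) := dotProductBilin K K f
  have hφ : φ ≠ 0 := by
    obtain ⟨i, hi⟩ := Function.ne_iff.mp hf
    exact fun h => hi (by simpa [φ] using LinearMap.congr_fun h (Pi.single i 1))
  have hle : LinearMap.range Aᵀ.mulVecLin ≤ LinearMap.ker φ := by
    rintro _ ⟨x, rfl⟩
    simp [φ, dotProduct_comm f, ← dotProduct_mulVec, hAf]
  have hrange : LinearMap.range Aᵀ.mulVecLin = LinearMap.ker φ := by
    refine Submodule.eq_of_le_of_finrank_eq hle ?_
    have := φ.finrank_ker_add_one_of_ne_zero hφ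
    rw [Module.finrank_fintype_fun_eq_card] at this
    change Aᵀ.rank = _
    rw [rank_transpose]
    omega
  obtain ⟨x, hx⟩ : w ∈ LinearMap.range Aᵀ.mulVecLin := hrange ▸ (by simpa [φ] using hw)
  exact ⟨x, hx⟩

theorem exists_eq_vecMulVec_add_vecMulVec_of_mul_mul_transpose_eq_zero [NeZero (2 : K)]
    [Fintype m] {A : Matrix m n K} (hr : A.rank + 1 = Fintype.card n) {f : n → K} (hf : f ≠ 0)
    (hAf : A *ᵥ f = 0) {M : Matrix n n K} (hM : M.IsSymm) (hAMA : A * M * Aᵀ = 0) :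
    ∃ u, M = vecMulVec f u + vecMulVec u f := by
  classical
  obtain ⟨i, hi⟩ : ∃ i, f i ≠ 0 := Function.ne_iff.mp hf
  refine hM.exists_eq_vecMulVec_add_vecMulVec (g := Pi.single i (f i)⁻¹)
    (by simp [dotProduct_single, hi]) fun w hw => ?_
  obtain ⟨x, rfl⟩ := exists_transpose_mulVec_eq_of_dotProduct_eq_zero hr hf hAf hw
  refine exists_smul_eq_of_mulVec_eq_zero hr hf hAf ?_
  rw [mulVec_mulVec, mulVec_mulVec, hAMA, zero_mulVec]

end Matrix

theorem stmt_5 (A₁ A₂ : Matrix (Fin 3) (Fin 4) ℝ)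
    (hrA₁ : A₁.rank = 3) (hrA₂ : A₂.rank = 3)
    (f₁ f₂ : Fin 4 → ℝ) (hf₁ : f₁ ≠ 0) (hf₂ : f₂ ≠ 0)
    (hA₁f₁ : A₁.mulVec f₁ = 0) (hA₂f₂ : A₂.mulVec f₂ = 0)
    (hind : LinearIndependent ℝ ![f₁, f₂]) :
    {M : Matrix (Fin 4) (Fin 4) ℝ | M.IsSymm ∧ A₁ * M * A₁ᵀ = 0 ∧ A₂ * M * A₂ᵀ = 0}
      = {M | ∃ c : ℝ, M = c • (vecMulVec f₁ f₂ + vecMulVec f₂ f₁)} ∧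
    vecMulVec f₁ f₂ + vecMulVec f₂ f₁ ≠ 0 := by
  have hr₁ : A₁.rank + 1 = Fintype.card (Fin 4) := by simp [hrA₁]
  have hr₂ : A₂.rank + 1 = Fintype.card (Fin 4) := by simp [hrA₂]
  have hA₂f₁ : A₂ *ᵥ f₁ ≠ 0 := fun h => by
    obtain ⟨c, hc⟩ := exists_smul_eq_of_mulVec_eq_zero hr₂ hf₂ hA₂f₂ h
    exact (linearIndependent_fin2.mp hind).2 c (by simpa using hc)
  refine ⟨Set.ext fun M => ⟨?_, ?_⟩,
    fun h => hf₂ (eq_zero_of_vecMulVec_add_vecMulVec_eq_zero h hf₁)⟩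
  · rintro ⟨hM, h₁, h₂⟩
    obtain ⟨u, rfl⟩ :=
      exists_eq_vecMulVec_add_vecMulVec_of_mul_mul_transpose_eq_zero hr₁ hf₁ hA₁f₁ hM h₁
    rw [mul_vecMulVec_add_vecMulVec_mul_transpose] at h₂
    obtain ⟨c, rfl⟩ := exists_smul_eq_of_mulVec_eq_zero hr₂ hf₂ hA₂f₂
      (eq_zero_of_vecMulVec_add_vecMulVec_eq_zero h₂ hA₂f₁)
    exact ⟨c, by simp [smul_add]⟩
  · rintro ⟨c, rfl⟩
    refine ⟨by simp [IsSymm, add_comm], ?_, ?_⟩ <;>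
      simp only [Matrix.mul_smul, Matrix.smul_mul, mul_vecMulVec_add_vecMulVec_mul_transpose,
        hA₁f₁, hA₂f₂, zero_vecMulVec, vecMulVec_zero, add_zero, smul_zero]
end

section
/- Let A be a real 3×4 matrix of rank 3 and let f ∈ ℝ⁴ be a nonzero vector with A f = 0. Then the set of symmetric real 4×4 matrices M satisfying A M Aᵀ = 0 is exactly the set { f wᵀ + w fᵀ : w ∈ ℝ⁴ }, which is a four-dimensional linear subspace of the ten-dimensional space of symmetric 4×4 matrices. -/
/-!
Every column of `M Aᵀ` lies in `ker A = ℝ f`, so `M Aᵀ = f cᵀ`; transposing, `A M = c fᵀ`.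
For `g` with `f ⬝ g = 1`, the matrix `M - (M g) fᵀ` is then killed by `A`, hence equals `f vᵀ`
by the same argument. So `M = u fᵀ + f vᵀ`, and symmetrising gives `M = f wᵀ + w fᵀ` with
`w = (u + v) / 2`. The map `w ↦ f wᵀ + w fᵀ` is injective: it sends `w` to a matrix taking `g`
to `(w ⬝ g) f + w`, whose pairing with `g` is `2 (w ⬝ g)`. Hence its range is four-dimensional.
-/

open Matrix

namespace Matrix

variable {K m n : Type*}

section CommRing

variable [CommRing K]

def symVecMulVec (f : n → K) : (n → K) →ₗ[K] Matrix n n K :=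
  vecMulVecBilin K K f + (vecMulVecBilin K K).flip f

@[simp]
theorem symVecMulVec_apply (f w : n → K) :
    symVecMulVec f w = vecMulVec f w + vecMulVec w f :=
  rfl

theorem isSymm_symVecMulVec (f w : n → K) : (symVecMulVec f w).IsSymm := by
  simp [IsSymm, add_comm]

theorem mul_symVecMulVec_mul_transpose [Fintype n] {A : Matrix m n K} {f : n → K}
    (hAf : A *ᵥ f = 0) (w : n → K) : A * symVecMulVec f w * Aᵀ = 0 := by
  have hAfw : A * vecMulVec f w = 0 := by rw [mul_vecMulVec, hAf, zero_vecMulVec]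
  have hwfA : vecMulVec w f * Aᵀ = 0 := by
    ext i j
    simp [vecMulVec_mul, vecMul_transpose, hAf, vecMulVec_apply]
  rw [symVecMulVec_apply, Matrix.mul_add, Matrix.add_mul, hAfw, Matrix.mul_assoc, hwfA]
  simp

end CommRing

variable [Field K]

theorem eq_symVecMulVec_of_isSymm [NeZero (2 : K)] {M : Matrix n n K} (hM : M.IsSymm)
    {u v f : n → K} (h : M = vecMulVec u f + vecMulVec f v) :
    M = symVecMulVec f ((2 : K)⁻¹ • (u + v)) := by
  have h2M : (2 : K) • M = symVecMulVec f (u + v) := by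
    rw [two_smul]
    nth_rw 1 [← hM.eq]
    rw [h]
    simp only [transpose_add, transpose_vecMulVec, symVecMulVec_apply, add_vecMulVec,
      vecMulVec_add]
    abel
  rw [map_smul, ← h2M, smul_smul, inv_mul_cancel₀ two_ne_zero, one_smul]

variable [Fintype n]

theorem exists_dotProduct_eq_one {f : n → K} (hf : f ≠ 0) : ∃ g : n → K, f ⬝ᵥ g = 1 := by
  classical
  obtain ⟨i, hi⟩ := Function.ne_iff.mp hf
  exact ⟨Pi.single i (f i)⁻¹, by simpa using mul_inv_cancel₀ hi⟩

theorem ker_mulVecLin_eq_span_of_rank_add_one [Fintype m] {A : Matrix m n K}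
    (hr : A.rank + 1 = Fintype.card n) {f : n → K} (hf : f ≠ 0) (hAf : A *ᵥ f = 0) :
    LinearMap.ker A.mulVecLin = K ∙ f := by
  have hker : Module.finrank K (LinearMap.ker A.mulVecLin) = 1 := by
    have := LinearMap.finrank_range_add_finrank_ker A.mulVecLin
    rw [Module.finrank_fintype_fun_eq_card] at this
    simp only [rank] at hr
    omega
  symm
  refine Submodule.eq_of_le_of_finrank_eq ?_ (by rw [hker, finrank_span_singleton hf])
  rw [Submodule.span_singleton_le_iff_mem]
  exact hAf

variable {A : Matrix m n K} {f : n → K}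

theorem exists_eq_vecMulVec_of_mul_eq_zero {l : Type*}
    (hker : LinearMap.ker A.mulVecLin ≤ K ∙ f) {N : Matrix n l K} (hN : A * N = 0) :
    ∃ c : l → K, N = vecMulVec f c := by
  have hcol : ∀ j, ∃ c : K, c • f = Nᵀ j := fun j ↦ by
    refine Submodule.mem_span_singleton.mp (hker ?_)
    ext i
    simpa [mulVec, dotProduct, mul_apply] using congrFun₂ hN i j
  choose c hc using hcol
  refine ⟨c, ext fun i j ↦ ?_⟩
  simpa [vecMulVec_apply, mul_comm] using (congrFun (hc j) i).symm

theorem exists_eq_vecMulVec_add_vecMulVec [Fintype m] (hker : LinearMap.ker A.mulVecLin ≤ K ∙ f)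
    (hf : f ≠ 0) {M : Matrix n n K} (hM : A * M * Aᵀ = 0) :
    ∃ u v : n → K, M = vecMulVec u f + vecMulVec f v := by
  obtain ⟨g, hfg⟩ := exists_dotProduct_eq_one hf
  obtain ⟨c, hc⟩ := exists_eq_vecMulVec_of_mul_eq_zero hker (N := Mᵀ * Aᵀ)
    (by simpa [Matrix.mul_assoc] using congrArg transpose hM)
  have hAM : A * M = vecMulVec c f := by simpa using congrArg transpose hc
  obtain ⟨v, hv⟩ := exists_eq_vecMulVec_of_mul_eq_zero hker (N := M - vecMulVec (M *ᵥ g) f)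
    (by rw [Matrix.mul_sub, mul_vecMulVec, mulVec_mulVec, hAM, vecMulVec_mulVec, hfg]; simp)
  exact ⟨M *ᵥ g, v, sub_eq_iff_eq_add'.mp hv⟩

theorem symVecMulVec_injective [NeZero (2 : K)] (hf : f ≠ 0) :
    Function.Injective (symVecMulVec f) := by
  obtain ⟨g, hfg⟩ := exists_dotProduct_eq_one hf
  refine (injective_iff_map_eq_zero _).mpr fun w hw ↦ ?_
  have hw_g : (w ⬝ᵥ g) • f + w = 0 := by
    simpa [add_mulVec, vecMulVec_mulVec, hfg] using congrArg (· *ᵥ g) hw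
  have hwg : w ⬝ᵥ g = 0 := by
    have := congrArg (dotProduct g) hw_g
    rw [dotProduct_add, dotProduct_smul, dotProduct_comm g f, hfg, dotProduct_comm g w,
      smul_eq_mul, mul_one, dotProduct_zero, ← two_mul] at this
    exact (mul_eq_zero.mp this).resolve_left two_ne_zero
  simpa [hwg] using hw_g

theorem rank_range_symVecMulVec [NeZero (2 : K)] (hf : f ≠ 0) :
    Module.rank K (LinearMap.range (symVecMulVec f)) = Fintype.card n := by
  rw [rank_range_of_injective _ (symVecMulVec_injective hf), rank_fun']

theorem setOf_isSymm_and_mul_mul_transpose_eq_zero [Fintype m] [NeZero (2 : K)]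
    (hker : LinearMap.ker A.mulVecLin = K ∙ f) (hf : f ≠ 0) :
    {M | M.IsSymm ∧ A * M * Aᵀ = 0} = Set.range (symVecMulVec f) := by
  have hAf : A *ᵥ f = 0 := hker.ge (Submodule.mem_span_singleton_self f)
  ext M
  constructor
  · rintro ⟨hM, hAMA⟩
    obtain ⟨u, v, huv⟩ := exists_eq_vecMulVec_add_vecMulVec hker.le hf hAMA
    exact ⟨_, (eq_symVecMulVec_of_isSymm hM huv).symm⟩
  · rintro ⟨w, rfl⟩
    exact ⟨isSymm_symVecMulVec f w, mul_symVecMulVec_mul_transpose hAf w⟩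

end Matrix

theorem stmt_6 (A : Matrix (Fin 3) (Fin 4) ℝ) (hrA : A.rank = 3)
    (f : Fin 4 → ℝ) (hf : f ≠ 0) (hAf : A.mulVec f = 0) :
    {M : Matrix (Fin 4) (Fin 4) ℝ | M.IsSymm ∧ A * M * Aᵀ = 0}
      = {M | ∃ w : Fin 4 → ℝ, M = vecMulVec f w + vecMulVec w f} ∧
    Module.rank ℝ
      (Submodule.span ℝ
        {M : Matrix (Fin 4) (Fin 4) ℝ | ∃ w : Fin 4 → ℝ,
          M = vecMulVec f w + vecMulVec w f}) = 4 := by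
  have hker := ker_mulVecLin_eq_span_of_rank_add_one (by rw [hrA]; rfl) hf hAf
  have hrange : {M | ∃ w : Fin 4 → ℝ, M = vecMulVec f w + vecMulVec w f}
      = Set.range (symVecMulVec f) :=
    Set.ext fun _ ↦ exists_congr fun _ ↦ eq_comm
  rw [hrange, ← LinearMap.coe_range, Submodule.span_eq, rank_range_symVecMulVec hf]
  exact ⟨setOf_isSymm_and_mul_mul_transpose_eq_zero hker hf, by simp⟩
end

section
/- Let A₁, A₂ be real 3×4 matrices of rank 3 with nonzero focal points f₁, f₂ ∈ ℝ⁴ (A₁ f₁ = 0, A₂ f₂ = 0) that are linearly independent. Let X, Y ∈ ℝ⁴ satisfy: X and Y do not lie in the span of {f₁, f₂}; A₁ X is not a scalar multiple of A₁ Y; A₂ X is not a scalar multiple of A₂ Y; and the span of {X, Y, f₁, f₂} has dimension at most 3 (the two world points are coplanar with the baseline). Then there exist nonzero vectors X′, Y′ ∈ ℝ⁴ and nonzero scalars μ₁, μ₂, μ₃, μ₄ ∈ ℝ such that A₁ X′ = μ₁ A₁ X, A₂ X′ = μ₂ A₂ Y, A₁ Y′ = μ₃ A₁ Y, A₂ Y′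 = μ₄ A₂ X, and neither X′ nor Y′ is a scalar multiple of X or of Y. In particular the unlabeled triangulation from the two views is ambiguous. -/
/-!
Since `X, f₁, f₂` are independent and the four points span at most a 3-space,
`Y = a X + β f₁ + γ f₂`; the nondegeneracy hypotheses force `a, β, γ ≠ 0`. The point
`X' = Y - γ f₂ = a X + β f₁` is seen by the first camera as `X` (it differs from `a X` by a
multiple of `f₁`) and by the second as `Y` (it differs from `Y` by a multiple of `f₂`);
symmetrically `Y' = Y - β f₁`. The non-proportionality claims are comparisons of coefficients
in the independent triple `X, f₁, f₂`.
-/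

open Matrix

open Module Submodule

section

variable {K V : Type*} [Field K] [AddCommGroup V] [Module K V] {x y u w : V}

theorem LinearIndependent.eq_zero_of_triple (h : LinearIndependent K ![x, u, w]) {a b c : K}
    (habc : a • x + b • u + c • w = 0) : a = 0 ∧ b = 0 ∧ c = 0 := by
  have := Fintype.linearIndependent_iff.1 h ![a, b, c] (by simpa [Fin.sum_univ_three] using habc)
  exact ⟨this 0, this 1, this 2⟩

theorem LinearIndependent.fin_cons_pair (h : LinearIndependent K ![u, w])
    (hx : x ∉ span K {u, w}) : LinearIndependent K ![x, u, w] :=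
  linearIndependent_finCons.2 ⟨h, by rwa [range_cons_cons_empty]⟩

theorem LinearIndependent.exists_eq_of_finrank_span_le (h : LinearIndependent K ![x, u, w])
    (hy : finrank K (span K {x, y, u, w}) ≤ 3) : ∃ a b c : K, y = a • x + b • u + c • w := by
  have hrange : Set.range ![x, u, w] = {x, u, w} := by
    simp only [range_cons, range_empty, Set.union_empty, Set.singleton_union]
  have hle : span K {x, u, w} ≤ span K {x, y, u, w} :=
    span_mono (Set.insert_subset_insert (Set.subset_insert _ _))
  have : FiniteDimensional K (span K {x, y, u, w}) := .span_of_finite K (Set.toFinite _)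
  have heq : span K {x, u, w} = span K {x, y, u, w} := by
    refine eq_of_le_of_finrank_le hle (hy.trans_eq ?_)
    rw [← hrange, finrank_span_eq_card h, Fintype.card_fin]
  have hmem : y ∈ span K {x, u, w} := heq ▸ subset_span (by simp)
  obtain ⟨a, z, hz, rfl⟩ := mem_span_insert.1 hmem
  obtain ⟨b, c, rfl⟩ := mem_span_pair.1 hz
  exact ⟨a, b, c, by rw [add_assoc]⟩

theorem LinearIndependent.smul_add_smul_ne_smul (h : LinearIndependent K ![x, u, w]) {b : K}
    (hb : b ≠ 0) (a c : K) : a • x + b • u ≠ c • x := fun hc =>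
  hb (h.eq_zero_of_triple (a := a - c) (c := 0) (by linear_combination (norm := module) hc)).2.1

theorem LinearIndependent.smul_add_smul_ne_smul_add {a c : K} (h : LinearIndependent K ![x, u, w])
    (ha : a ≠ 0) (hc : c ≠ 0) (b d : K) : a • x + b • u ≠ d • (a • x + b • u + c • w) := by
  intro hd
  obtain ⟨hx, -, hw⟩ := h.eq_zero_of_triple (a := a - d * a) (b := b - d * b) (c := - (d * c))
    (by linear_combination (norm := module) hd)
  have hd0 : d = 0 := by simpa [hc] using hw
  exact ha (by simpa [hd0] using hx)

end

theorem stmt_8_general (A₁ A₂ : Matrix (Fin 3) (Fin 4) ℝ)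
    (f₁ f₂ : Fin 4 → ℝ)
    (hA₁f₁ : A₁.mulVec f₁ = 0) (hA₂f₂ : A₂.mulVec f₂ = 0)
    (hind : LinearIndependent ℝ ![f₁, f₂])
    (X Y : Fin 4 → ℝ)
    (hX : X ∉ Submodule.span ℝ ({f₁, f₂} : Set (Fin 4 → ℝ)))
    (hY : Y ∉ Submodule.span ℝ ({f₁, f₂} : Set (Fin 4 → ℝ)))
    (h₁ : ∀ c : ℝ, A₁.mulVec X ≠ c • A₁.mulVec Y)
    (h₂ : ∀ c : ℝ, A₂.mulVec X ≠ c • A₂.mulVec Y)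
    (hcop : Module.finrank ℝ
      (Submodule.span ℝ ({X, Y, f₁, f₂} : Set (Fin 4 → ℝ))) ≤ 3) :
    ∃ X' Y' : Fin 4 → ℝ, X' ≠ 0 ∧ Y' ≠ 0 ∧
      ∃ μ₁ μ₂ μ₃ μ₄ : ℝ, μ₁ ≠ 0 ∧ μ₂ ≠ 0 ∧ μ₃ ≠ 0 ∧ μ₄ ≠ 0 ∧
        A₁.mulVec X' = μ₁ • A₁.mulVec X ∧
        A₂.mulVec X' = μ₂ • A₂.mulVec Y ∧
        A₁.mulVec Y' = μ₃ • A₁.mulVec Y ∧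
        A₂.mulVec Y' = μ₄ • A₂.mulVec X ∧
        (∀ c : ℝ, X' ≠ c • X) ∧ (∀ c : ℝ, X' ≠ c • Y) ∧
        (∀ c : ℝ, Y' ≠ c • X) ∧ (∀ c : ℝ, Y' ≠ c • Y) := by
  have hX₁₂ : LinearIndependent ℝ ![X, f₁, f₂] := hind.fin_cons_pair hX
  have hX₂₁ : LinearIndependent ℝ ![X, f₂, f₁] :=
    (LinearIndependent.pair_symm_iff.1 hind).fin_cons_pair (by rwa [Set.pair_comm])
  obtain ⟨a, β, γ, rfl⟩ := hX₁₂.exists_eq_of_finrank_span_le hcop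
  have ha : a ≠ 0 := by
    rintro rfl
    exact hY (mem_span_pair.2 ⟨β, γ, by rw [zero_smul, zero_add]⟩)
  have hβ : β ≠ 0 := by
    rintro rfl
    exact h₂ a⁻¹ (by simp [mulVec_add, mulVec_smul, hA₂f₂, smul_smul, ha])
  have hγ : γ ≠ 0 := by
    rintro rfl
    exact h₁ a⁻¹ (by simp [mulVec_add, mulVec_smul, hA₁f₁, smul_smul, ha])
  refine ⟨a • X + β • f₁, a • X + γ • f₂, by simpa using hX₁₂.smul_add_smul_ne_smul hβ a 0,
    by simpa using hX₂₁.smul_add_smul_ne_smul hγ a 0, a, 1, 1, a, ha, one_ne_zero, one_ne_zero, ha,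
    ?_, ?_, ?_, ?_, hX₁₂.smul_add_smul_ne_smul hβ a, hX₁₂.smul_add_smul_ne_smul_add ha hγ β,
    hX₂₁.smul_add_smul_ne_smul hγ a, add_right_comm (a • X) (β • f₁) (γ • f₂) ▸
      hX₂₁.smul_add_smul_ne_smul_add ha hβ γ⟩
  all_goals simp [mulVec_add, mulVec_smul, hA₁f₁, hA₂f₂]

theorem stmt_8 (A₁ A₂ : Matrix (Fin 3) (Fin 4) ℝ)
    (hrA₁ : A₁.rank = 3) (hrA₂ : A₂.rank = 3)
    (f₁ f₂ : Fin 4 → ℝ) (hf₁ : f₁ ≠ 0) (hf₂ : f₂ ≠ 0)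
    (hA₁f₁ : A₁.mulVec f₁ = 0) (hA₂f₂ : A₂.mulVec f₂ = 0)
    (hind : LinearIndependent ℝ ![f₁, f₂])
    (X Y : Fin 4 → ℝ)
    (hX : X ∉ Submodule.span ℝ ({f₁, f₂} : Set (Fin 4 → ℝ)))
    (hY : Y ∉ Submodule.span ℝ ({f₁, f₂} : Set (Fin 4 → ℝ)))
    (h₁ : ∀ c : ℝ, A₁.mulVec X ≠ c • A₁.mulVec Y)
    (h₂ : ∀ c : ℝ, A₂.mulVec X ≠ c • A₂.mulVec Y)
    (hcop : Module.finrank ℝ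
      (Submodule.span ℝ ({X, Y, f₁, f₂} : Set (Fin 4 → ℝ))) ≤ 3) :
    ∃ X' Y' : Fin 4 → ℝ, X' ≠ 0 ∧ Y' ≠ 0 ∧
      ∃ μ₁ μ₂ μ₃ μ₄ : ℝ, μ₁ ≠ 0 ∧ μ₂ ≠ 0 ∧ μ₃ ≠ 0 ∧ μ₄ ≠ 0 ∧
        A₁.mulVec X' = μ₁ • A₁.mulVec X ∧
        A₂.mulVec X' = μ₂ • A₂.mulVec Y ∧
        A₁.mulVec Y' = μ₃ • A₁.mulVec Y ∧
        A₂.mulVec Y' = μ₄ • A₂.mulVec X ∧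
        (∀ c : ℝ, X' ≠ c • X) ∧ (∀ c : ℝ, X' ≠ c • Y) ∧
        (∀ c : ℝ, Y' ≠ c • X) ∧ (∀ c : ℝ, Y' ≠ c • Y) :=
  stmt_8_general A₁ A₂ f₁ f₂ hA₁f₁ hA₂f₂ hind X Y hX hY h₁ h₂ hcop
end

section
/- Let A₁, A₂ be real 3×4 matrices of rank 3 with nonzero focal points f₁, f₂ ∈ ℝ⁴ (A₁ f₁ = 0, A₂ f₂ = 0). Let X, Y ∈ ℝ⁴. If there exist a vector X′ ∈ ℝ⁴ and nonzero scalars μ₁, μ₂ ∈ ℝ with A₁ X′ = μ₁ A₁ X and A₂ X′ = μ₂ A₂ Y, then the span of {X, Y, f₁, f₂} has dimension at most 3; that is, the two world points are coplanar with the baseline. -/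
/-!
The kernel of a rank-3 camera is the line through its focal point, so `X' - μ₁ X` is a multiple
of `f₁` and `X' - μ₂ Y` a multiple of `f₂`. Subtracting, `μ₁ X ∈ span {Y, f₁, f₂}`, and that span
has dimension at most 3.
-/

open Matrix

theorem Matrix.ker_mulVecLin_eq_span_singleton {K m n : Type*} [Field K] [Fintype m] [Fintype n]
    (A : Matrix m n K) (hA : A.rank + 1 = Fintype.card n) {f : n → K} (hf : f ≠ 0)
    (hAf : A *ᵥ f = 0) : LinearMap.ker A.mulVecLin = K ∙ f := by
  have hker : Module.finrank K (LinearMap.ker A.mulVecLin) = 1 := by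
    have := LinearMap.finrank_range_add_finrank_ker A.mulVecLin
    rw [Module.finrank_fintype_fun_eq_card, ← hA] at this
    rw [Matrix.rank] at *
    omega
  refine (Submodule.eq_of_le_of_finrank_eq ?_ ?_).symm
  · exact (Submodule.span_singleton_le_iff_mem _ _).mpr hAf
  · rw [finrank_span_singleton hf, hker]

theorem mem_span_of_sub_smul_mem_span_singleton {K V : Type*} [Field K] [AddCommGroup V]
    [Module K V] {x' x y f₁ f₂ : V} {μ₁ μ₂ : K} (hμ₁ : μ₁ ≠ 0)
    (h₁ : x' - μ₁ • x ∈ K ∙ f₁) (h₂ : x' - μ₂ • y ∈ K ∙ f₂) :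
    x ∈ Submodule.span K {y, f₁, f₂} := by
  set P := Submodule.span K {y, f₁, f₂}
  have hy : y ∈ P := Submodule.subset_span (by simp)
  have hf₁ : K ∙ f₁ ≤ P := Submodule.span_mono (by simp)
  have hf₂ : K ∙ f₂ ≤ P := Submodule.span_mono (by simp)
  have hx : μ₁ • x = μ₂ • y + (x' - μ₂ • y) - (x' - μ₁ • x) := by abel
  rw [← Submodule.smul_mem_iff P hμ₁, hx]
  exact P.sub_mem (P.add_mem (P.smul_mem μ₂ hy) (hf₂ h₂)) (hf₁ h₁)

theorem stmt_9 (A₁ A₂ : Matrix (Fin 3) (Fin 4) ℝ)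
    (hrA₁ : A₁.rank = 3) (hrA₂ : A₂.rank = 3)
    (f₁ f₂ : Fin 4 → ℝ) (hf₁ : f₁ ≠ 0) (hf₂ : f₂ ≠ 0)
    (hA₁f₁ : A₁.mulVec f₁ = 0) (hA₂f₂ : A₂.mulVec f₂ = 0)
    (X Y : Fin 4 → ℝ)
    (hyp : ∃ (X' : Fin 4 → ℝ) (μ₁ μ₂ : ℝ), μ₁ ≠ 0 ∧ μ₂ ≠ 0 ∧
      A₁.mulVec X' = μ₁ • A₁.mulVec X ∧ A₂.mulVec X' = μ₂ • A₂.mulVec Y) :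
    Module.finrank ℝ
      (Submodule.span ℝ ({X, Y, f₁, f₂} : Set (Fin 4 → ℝ))) ≤ 3 := by
  obtain ⟨X', μ₁, μ₂, hμ₁, -, hX, hY⟩ := hyp
  have h₁ : X' - μ₁ • X ∈ ℝ ∙ f₁ := by
    rw [← A₁.ker_mulVecLin_eq_span_singleton (by simp [hrA₁]) hf₁ hA₁f₁, LinearMap.mem_ker]
    simp [mulVec_sub, mulVec_smul, hX]
  have h₂ : X' - μ₂ • Y ∈ ℝ ∙ f₂ := by
    rw [← A₂.ker_mulVecLin_eq_span_singleton (by simp [hrA₂]) hf₂ hA₂f₂, LinearMap.mem_ker]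
    simp [mulVec_sub, mulVec_smul, hY]
  rw [Submodule.span_insert_eq_span (mem_span_of_sub_smul_mem_span_singleton hμ₁ h₁ h₂)]
  classical
  have hcard := (finrank_span_finset_le_card (R := ℝ) ({Y, f₁, f₂} : Finset (Fin 4 → ℝ))).trans
    Finset.card_le_three
  rwa [Finset.coe_insert, Finset.coe_insert, Finset.coe_singleton] at hcard
end

section
/- Let A₁, A₂ be real 3×4 matrices of rank 3 with nonzero focal points f₁, f₂ ∈ ℝ⁴ (A₁ f₁ = 0, A₂ f₂ = 0) that are linearly independent. Let X, Y ∈ ℝ⁴ satisfy: X and Y do not lie in the span of {f₁, f₂}, and the span of {X, Y, f₁, f₂} has dimension at most 3. Then the intersection of the planes span{f₁, X} and span{f₂, Y} is a one-dimensional subspace of ℝ⁴, and every vector X″ ∈ ℝ⁴ for which there exist nonzero scalars ν₁, ν₂ with A₁ X″ = ν₁ A₁ X and A₂ X″ = ν₂ A₂ Y lies in this one-dimensional intersection. In particular, the alternative (crosswise) triangulated point is unique up to scale. -/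
/-!
The planes `span {f₁, X}` and `span {f₂, Y}` are two-dimensional, and their sum
`span {X, Y, f₁, f₂}` contains the three-dimensional `span {f₁, f₂, X}`, so it has dimension
exactly 3; Grassmann's formula leaves `2 + 2 - 3 = 1` for the intersection. A rank-3 camera
has as kernel exactly the line through its focal point, so `A₁ X'' = ν₁ A₁ X` puts `X'' - ν₁ X`
on that line, i.e. `X''` on the back-projected line `span {f₁, X}`; likewise for `A₂`.
-/

open Module Submodule

namespace Matrix

variable {m n K : Type*} [Fintype n] [Field K]

theorem ker_mulVecLin_eq_span_singleton_s10 {A : Matrix m n K} (hA : A.rank + 1 = Fintype.card n)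
    {f : n → K} (hf : f ≠ 0) (hAf : A *ᵥ f = 0) :
    LinearMap.ker A.mulVecLin = K ∙ f := by
  have hker : finrank K (LinearMap.ker A.mulVecLin) = 1 := by
    have := LinearMap.finrank_range_add_finrank_ker A.mulVecLin
    rw [finrank_fintype_fun_eq_card] at this
    change A.rank + _ = _ at this
    omega
  refine (eq_of_le_of_finrank_le ?_ ?_).symm
  · rwa [span_singleton_le_iff_mem, LinearMap.mem_ker, mulVecLin_apply]
  · rw [hker, finrank_span_singleton hf]

theorem mem_span_pair_of_mulVec_eq_smul {A : Matrix m n K} {f : n → K}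
    (hker : LinearMap.ker A.mulVecLin = K ∙ f) {x X : n → K} {ν : K}
    (h : A *ᵥ x = ν • A *ᵥ X) : x ∈ span K {f, X} := by
  have hmem : x - ν • X ∈ K ∙ f := by
    rw [← hker, LinearMap.mem_ker, mulVecLin_apply, mulVec_sub, mulVec_smul, h, sub_self]
  obtain ⟨c, hc⟩ := mem_span_singleton.mp hmem
  exact mem_span_pair.mpr ⟨c, ν, by rw [hc, sub_add_cancel]⟩

end Matrix

section

variable {K V : Type*} [Field K] [AddCommGroup V] [Module K V] [FiniteDimensional K V]

theorem finrank_span_pair_eq_two {a b : V} (ha : a ≠ 0) (hb : b ∉ K ∙ a) :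
    finrank K (span K {a, b}) = 2 := by
  rw [span_insert, finrank_sup_span_singleton hb, finrank_span_singleton ha]

theorem LinearIndependent.finrank_span_pair_eq_two {a b : V} (h : LinearIndependent K ![a, b]) :
    finrank K (span K {a, b}) = 2 := by
  have ha : a ≠ 0 := h.ne_zero 0
  refine _root_.finrank_span_pair_eq_two ha fun hb ↦ ?_
  obtain ⟨c, hc⟩ := mem_span_singleton.mp hb
  exact (LinearIndependent.pair_iff' ha).mp h c hc

theorem finrank_span_pair_inf_span_pair_eq_one {f₁ f₂ X Y : V}
    (hf : LinearIndependent K ![f₁, f₂])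
    (hX : X ∉ span K {f₁, f₂}) (hY : Y ∉ span K {f₁, f₂})
    (hW : finrank K (span K {X, Y, f₁, f₂}) ≤ 3) :
    finrank K (span K {f₁, X} ⊓ span K {f₂, Y} : Submodule K V) = 1 := by
  have hP₁ : finrank K (span K {f₁, X}) = 2 :=
    finrank_span_pair_eq_two (hf.ne_zero 0) fun h ↦ hX (span_mono (by simp) h)
  have hP₂ : finrank K (span K {f₂, Y}) = 2 :=
    finrank_span_pair_eq_two (hf.ne_zero 1) fun h ↦ hY (span_mono (by simp) h)
  have hsup : span K {f₁, X} ⊔ span K {f₂, Y} = span K {X, Y, f₁, f₂} := by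
    rw [← span_union]
    congr 1
    ext v
    simp only [Set.mem_union, Set.mem_insert_iff, Set.mem_singleton_iff]
    tauto
  have hW₃ : 3 ≤ finrank K (span K {X, Y, f₁, f₂}) :=
    calc 3 = finrank K (span K {f₁, f₂} ⊔ K ∙ X : Submodule K V) := by
          rw [finrank_sup_span_singleton hX, hf.finrank_span_pair_eq_two]
      _ ≤ finrank K (span K {X, Y, f₁, f₂}) :=
          finrank_mono (sup_le (span_mono (by simp [Set.subset_def])) (span_mono (by simp)))
  have := finrank_sup_add_finrank_inf_eq (span K {f₁, X}) (span K {f₂, Y})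
  rw [hsup, hP₁, hP₂] at this
  omega

end

theorem stmt_10_general (A₁ A₂ : Matrix (Fin 3) (Fin 4) ℝ)
    (hrA₁ : A₁.rank = 3) (hrA₂ : A₂.rank = 3)
    (f₁ f₂ : Fin 4 → ℝ)
    (hA₁f₁ : A₁.mulVec f₁ = 0) (hA₂f₂ : A₂.mulVec f₂ = 0)
    (hind : LinearIndependent ℝ ![f₁, f₂])
    (X Y : Fin 4 → ℝ)
    (hX : X ∉ Submodule.span ℝ ({f₁, f₂} : Set (Fin 4 → ℝ)))
    (hY : Y ∉ Submodule.span ℝ ({f₁, f₂} : Set (Fin 4 → ℝ)))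
    (hcop : Module.finrank ℝ
      (Submodule.span ℝ ({X, Y, f₁, f₂} : Set (Fin 4 → ℝ))) ≤ 3) :
    Module.finrank ℝ
      ((Submodule.span ℝ ({f₁, X} : Set (Fin 4 → ℝ))) ⊓
       (Submodule.span ℝ ({f₂, Y} : Set (Fin 4 → ℝ))) : Submodule ℝ (Fin 4 → ℝ)) = 1 ∧
    ∀ (X'' : Fin 4 → ℝ) (ν₁ ν₂ : ℝ), ν₁ ≠ 0 → ν₂ ≠ 0 →
      A₁.mulVec X'' = ν₁ • A₁.mulVec X → A₂.mulVec X'' = ν₂ • A₂.mulVec Y →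
      X'' ∈ (Submodule.span ℝ ({f₁, X} : Set (Fin 4 → ℝ))) ⊓
            (Submodule.span ℝ ({f₂, Y} : Set (Fin 4 → ℝ))) := by
  refine ⟨finrank_span_pair_inf_span_pair_eq_one hind hX hY hcop,
    fun X'' ν₁ ν₂ _ _ h₁ h₂ ↦ ⟨?_, ?_⟩⟩
  · exact Matrix.mem_span_pair_of_mulVec_eq_smul
      (Matrix.ker_mulVecLin_eq_span_singleton_s10 (by simp [hrA₁]) (hind.ne_zero 0) hA₁f₁) h₁
  · exact Matrix.mem_span_pair_of_mulVec_eq_smul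
      (Matrix.ker_mulVecLin_eq_span_singleton_s10 (by simp [hrA₂]) (hind.ne_zero 1) hA₂f₂) h₂

theorem stmt_10 (A₁ A₂ : Matrix (Fin 3) (Fin 4) ℝ)
    (hrA₁ : A₁.rank = 3) (hrA₂ : A₂.rank = 3)
    (f₁ f₂ : Fin 4 → ℝ) (hf₁ : f₁ ≠ 0) (hf₂ : f₂ ≠ 0)
    (hA₁f₁ : A₁.mulVec f₁ = 0) (hA₂f₂ : A₂.mulVec f₂ = 0)
    (hind : LinearIndependent ℝ ![f₁, f₂])
    (X Y : Fin 4 → ℝ)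
    (hX : X ∉ Submodule.span ℝ ({f₁, f₂} : Set (Fin 4 → ℝ)))
    (hY : Y ∉ Submodule.span ℝ ({f₁, f₂} : Set (Fin 4 → ℝ)))
    (hcop : Module.finrank ℝ
      (Submodule.span ℝ ({X, Y, f₁, f₂} : Set (Fin 4 → ℝ))) ≤ 3) :
    Module.finrank ℝ
      ((Submodule.span ℝ ({f₁, X} : Set (Fin 4 → ℝ))) ⊓
       (Submodule.span ℝ ({f₂, Y} : Set (Fin 4 → ℝ))) : Submodule ℝ (Fin 4 → ℝ)) = 1 ∧
    ∀ (X'' : Fin 4 → ℝ) (ν₁ ν₂ : ℝ), ν₁ ≠ 0 → ν₂ ≠ 0 →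
      A₁.mulVec X'' = ν₁ • A₁.mulVec X → A₂.mulVec X'' = ν₂ • A₂.mulVec Y →
      X'' ∈ (Submodule.span ℝ ({f₁, X} : Set (Fin 4 → ℝ))) ⊓
            (Submodule.span ℝ ({f₂, Y} : Set (Fin 4 → ℝ))) :=
  stmt_10_general A₁ A₂ hrA₁ hrA₂ f₁ f₂ hA₁f₁ hA₂f₂ hind X Y hX hY hcop
end

section
/- Let A₁, A₂, A₃ be real 3×4 matrices of rank 3 with nonzero focal points f₁, f₂, f₃ ∈ ℝ⁴ (Aᵢ fᵢ = 0) that are pairwise linearly independent. If M is a symmetric real 4×4 matrix with A₁ M A₁ᵀ = 0, A₂ M A₂ᵀ = 0, and A₃ M A₃ᵀ = 0, then M = 0. Consequently, for three or more cameras with pairwise distinct focal points, the joint linear map M ↦ (Aᵢ M Aᵢᵀ)ᵢ on symmetric 4×4 matrices has trivial kernel (full column rank of the stacked coefficient matrix). -/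
/-!
The condition `A * M * Aᵀ = 0` says that the quadratic form `x ↦ x ⬝ᵥ M *ᵥ x` vanishes on
`range Aᵀ`, which for a camera with focal point `f` is the hyperplane `f⊥`. A quadratic form
vanishing on a hyperplane `ker φ₂` factors as `φ₂ · L` with `L` linear. If it also vanishes on two
hyperplanes `ker φ₁`, `ker φ₃` different from `ker φ₂`, then `L` vanishes on both of them (a
subspace is never the union of two proper subspaces), so `L = 0` as `ker φ₁ ≠ ker φ₃`. Finally a
symmetric real matrix is determined by its quadratic form.
-/

open LinearMap

namespace Module.Dual

variable {K V : Type*} [Field K] [AddCommGroup V] [Module K V]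

theorem exists_smul_eq_of_ker_le_ker {φ ψ : Module.Dual K V} (h : ker φ ≤ ker ψ) :
    ∃ a : K, a • φ = ψ := by
  have := mem_span_of_iInf_ker_le_ker (L := fun _ : Unit => φ) (K := ψ) (by simpa using h)
  rwa [Set.range_const, Submodule.mem_span_singleton] at this

theorem not_ker_le_ker_of_linearIndependent {φ ψ : Module.Dual K V}
    (h : LinearIndependent K ![φ, ψ]) : ¬ ker φ ≤ ker ψ := fun hle => by
  obtain ⟨a, rfl⟩ := exists_smul_eq_of_ker_le_ker hle
  simpa using (LinearIndependent.pair_iff.mp h a (-1) (by simp)).2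

theorem eq_zero_of_ker_le_ker_of_linearIndependent {φ ψ L : Module.Dual K V}
    (h : LinearIndependent K ![φ, ψ]) (hφ : ker φ ≤ ker L) (hψ : ker ψ ≤ ker L) : L = 0 := by
  obtain ⟨a, rfl⟩ := exists_smul_eq_of_ker_le_ker hφ
  obtain ⟨b, hb⟩ := exists_smul_eq_of_ker_le_ker hψ
  have ha := (LinearIndependent.pair_iff.mp h a (-b) (by rw [← hb]; simp)).1
  simp [ha]

theorem le_ker_of_forall_mul_eq_zero {p : Submodule K V} {ψ L : Module.Dual K V}
    (hp : ¬ p ≤ ker ψ) (h : ∀ x ∈ p, ψ x * L x = 0) : p ≤ ker L :=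
  (AddSubgroupClass.subset_union.mp fun x hx => mul_eq_zero.mp (h x hx)).resolve_left hp

end Module.Dual

namespace QuadraticMap

variable {K V : Type*} [Field K] [AddCommGroup V] [Module K V]

theorem exists_eq_mul_of_forall_mem_ker_eq_zero (Q : QuadraticForm K V) {φ : Module.Dual K V}
    (hφ : φ ≠ 0) (hQ : ∀ x ∈ ker φ, Q x = 0) :
    ∃ L : Module.Dual K V, ∀ x, Q x = φ x * L x := by
  obtain ⟨g, hg⟩ := LinearMap.surjective hφ 1
  -- Splitting `x = h + φ x • g` with `h ∈ ker φ` gives `Q x = φ x * (polar Q g h + φ x * Q g)`.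
  refine ⟨Q.polarBilin g - Q g • φ, fun x => ?_⟩
  set c := φ x with hc
  set h := x - c • g
  have hQh : Q h = 0 := hQ h (by simp [h, hg, hc])
  have hx : x = h + c • g := by simp [h]
  have hQx : Q x = c * polar Q g h + c * c * Q g := by
    have := polar_smul_right Q c h g
    rw [polar, ← hx, hQh, QuadraticMap.map_smul, polar_comm] at this
    simp only [smul_eq_mul] at this
    linear_combination this
  have hpolar : polar Q g x = polar Q g h + 2 * c * Q g := by
    rw [hx, polar_add_right, polar_smul_right, polar_self]
    simp only [smul_eq_mul, nsmul_eq_mul]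
    push_cast
    ring
  simp only [LinearMap.sub_apply, polarBilin_apply_apply, LinearMap.smul_apply, smul_eq_mul,
    ← hc, hQx, hpolar]
  ring

theorem eq_zero_of_vanishes_on_three_hyperplanes (Q : QuadraticForm K V)
    {φ₁ φ₂ φ₃ : Module.Dual K V} (h₁₂ : LinearIndependent K ![φ₁, φ₂])
    (h₁₃ : LinearIndependent K ![φ₁, φ₃]) (h₂₃ : LinearIndependent K ![φ₂, φ₃])
    (hQ₁ : ∀ x ∈ ker φ₁, Q x = 0) (hQ₂ : ∀ x ∈ ker φ₂, Q x = 0)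
    (hQ₃ : ∀ x ∈ ker φ₃, Q x = 0) : Q = 0 := by
  obtain ⟨L, hL⟩ := Q.exists_eq_mul_of_forall_mem_ker_eq_zero (h₁₂.ne_zero 1) hQ₂
  have hL₁ : ker φ₁ ≤ ker L :=
    Module.Dual.le_ker_of_forall_mul_eq_zero
      (Module.Dual.not_ker_le_ker_of_linearIndependent h₁₂)
      fun x hx => (hL x).symm.trans (hQ₁ x hx)
  have hL₃ : ker φ₃ ≤ ker L :=
    Module.Dual.le_ker_of_forall_mul_eq_zero
      (Module.Dual.not_ker_le_ker_of_linearIndependent (LinearIndependent.pair_symm_iff.mp h₂₃))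
      fun x hx => (hL x).symm.trans (hQ₃ x hx)
  have hL₀ : L = 0 := Module.Dual.eq_zero_of_ker_le_ker_of_linearIndependent h₁₃ hL₁ hL₃
  ext x
  simp [hL, hL₀]

end QuadraticMap

namespace Matrix

variable {K m n : Type*} [Field K] [Fintype m] [Fintype n] [DecidableEq n]

theorem range_mulVecLin_transpose_eq_ker {A : Matrix m n K} (hA : A.rank + 1 = Fintype.card n)
    {f : n → K} (hf : f ≠ 0) (hAf : A *ᵥ f = 0) :
    range Aᵀ.mulVecLin = ker (dotProductEquiv K n f) := by
  refine Submodule.eq_of_le_of_finrank_eq ?_ ?_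
  · rintro _ ⟨p, rfl⟩
    simp [dotProduct_comm f, ← dotProduct_mulVec, hAf]
  · have := Module.Dual.finrank_ker_add_one_of_ne_zero
      ((dotProductEquiv K n).map_ne_zero_iff.mpr hf)
    rw [Module.finrank_fintype_fun_eq_card] at this
    rw [← rank, rank_transpose]
    omega

theorem toQuadraticForm'_mulVec_transpose [DecidableEq m] (M : Matrix n n K) (A : Matrix m n K)
    (p : m → K) : M.toQuadraticForm' (Aᵀ *ᵥ p) = (A * M * Aᵀ).toQuadraticForm' p := by
  simp only [toQuadraticForm', LinearMap.BilinMap.toQuadraticMap_apply, toLinearMap₂'_apply']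
  rw [← mulVec_mulVec, ← mulVec_mulVec, dotProduct_mulVec p A, ← mulVec_transpose]

theorem toQuadraticForm'_eq_zero_of_mem_ker [DecidableEq m] {M : Matrix n n K}
    {A : Matrix m n K} (hA : A.rank + 1 = Fintype.card n) {f : n → K} (hf : f ≠ 0)
    (hAf : A *ᵥ f = 0) (hAMA : A * M * Aᵀ = 0) :
    ∀ x ∈ ker (dotProductEquiv K n f), M.toQuadraticForm' x = 0 := by
  rw [← range_mulVecLin_transpose_eq_ker hA hf hAf]
  rintro _ ⟨p, rfl⟩
  rw [mulVecLin_apply, toQuadraticForm'_mulVec_transpose, hAMA]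
  simp [toQuadraticForm']

theorem eq_zero_of_toQuadraticForm'_eq_zero [Invertible (2 : K)] {M : Matrix n n K}
    (hM : M.IsSymm) (hQ : M.toQuadraticForm' = 0) : M = 0 := by
  have h := QuadraticMap.associated_left_inverse K (R := K) (B₁ := toLinearMap₂' K M)
    fun x y => by
      rw [toLinearMap₂'_apply', toLinearMap₂'_apply', dotProduct_mulVec, ← mulVec_transpose,
        hM.eq, dotProduct_comm]
  rw [← toQuadraticForm', hQ, map_zero] at h
  exact (toLinearMap₂' K).injective (by rw [← h, map_zero])

end Matrix

open Matrix

theorem stmt_13 (A₁ A₂ A₃ : Matrix (Fin 3) (Fin 4) ℝ)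
    (hrA₁ : A₁.rank = 3) (hrA₂ : A₂.rank = 3) (hrA₃ : A₃.rank = 3)
    (f₁ f₂ f₃ : Fin 4 → ℝ) (hf₁ : f₁ ≠ 0) (hf₂ : f₂ ≠ 0) (hf₃ : f₃ ≠ 0)
    (hA₁f₁ : A₁.mulVec f₁ = 0) (hA₂f₂ : A₂.mulVec f₂ = 0) (hA₃f₃ : A₃.mulVec f₃ = 0)
    (h₁₂ : LinearIndependent ℝ ![f₁, f₂])
    (h₁₃ : LinearIndependent ℝ ![f₁, f₃])
    (h₂₃ : LinearIndependent ℝ ![f₂, f₃]) :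
    ∀ M : Matrix (Fin 4) (Fin 4) ℝ, M.IsSymm →
      A₁ * M * A₁ᵀ = 0 → A₂ * M * A₂ᵀ = 0 → A₃ * M * A₃ᵀ = 0 → M = 0 := by
  intro M hM h₁ h₂ h₃
  let e := dotProductEquiv ℝ (Fin 4)
  have he {f g : Fin 4 → ℝ} (h : LinearIndependent ℝ ![f, g]) :
      LinearIndependent ℝ ![e f, e g] := by
    have := h.map' e.toLinearMap e.ker
    rwa [LinearEquiv.coe_coe, ← FinVec.map_eq] at this
  have hcard {A : Matrix (Fin 3) (Fin 4) ℝ} (hA : A.rank = 3) :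
      A.rank + 1 = Fintype.card (Fin 4) := by
    simp [hA]
  exact eq_zero_of_toQuadraticForm'_eq_zero hM <|
    M.toQuadraticForm'.eq_zero_of_vanishes_on_three_hyperplanes (he h₁₂) (he h₁₃) (he h₂₃)
      (toQuadraticForm'_eq_zero_of_mem_ker (hcard hrA₁) hf₁ hA₁f₁ h₁)
      (toQuadraticForm'_eq_zero_of_mem_ker (hcard hrA₂) hf₂ hA₂f₂ h₂)
      (toQuadraticForm'_eq_zero_of_mem_ker (hcard hrA₃) hf₃ hA₃f₃ h₃)
end
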